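/- arXiv:1606.08927 — 3 statements merged into one kernel-verified Lean document; each statement's English description precedes it below -/
import Mathlib

section
/- Let the LT propagation on the multiplex system G^{1..k} start from a seed set S ⊆ U and the LT propagation on its clique lossless coupled network G start from S' = { s^0 : s ∈ S }. Then for every d ≥ 1 and every user u, if u ∈ A^d(G^{1..k},S) then there exists i ∈ {1,…,k} such that the representative vertex u^i belongs to A^{2d-1}(G,S'). -/
open scoped Classical

/-- LT active sets on a single directed weighted network `G = (V, w, θ)`:
`ltIter w θ S 0 = S` and
`ltIter w θ S (t+1) = ltIter w θ S t ∪ { x | Σ_{y ∈ A^t} w y x ≥ θ x }`. -/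
noncomputable def ltIter {V : Type*} [Fintype V] [DecidableEq V]
    (w : V → V → ℝ) (θ : V → ℝ) (S : Finset V) : ℕ → Finset V
  | 0 => S
  | t + 1 =>
      ltIter w θ S t ∪
        Finset.univ.filter (fun x => θ x ≤ ∑ y ∈ ltIter w θ S t, w y x)

/-- LT active sets on the multiplex system `G^{1..k}`:
`A^0 = S` and `A^{t+1} = A^t ∪ { u | ∃ i, Σ_{v ∈ A^t} w^i v u ≥ θ^i u }`. -/
noncomputable def multiIter {U : Type*} [Fintype U] [DecidableEq U] {k : ℕ}
    (w : Fin k → U → U → ℝ) (θ : Fin k → U → ℝ) (S : Finset U) : ℕ → Finset U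
  | 0 => S
  | t + 1 =>
      multiIter w θ S t ∪
        Finset.univ.filter
          (fun u => ∃ i : Fin k, θ i u ≤ ∑ v ∈ multiIter w θ S t, w i v u)

/-- Thresholds of the clique lossless coupled network.  The vertex `(u, none)` is the
gateway vertex `u⁰` (threshold 1), and `(u, some i)` is the representative vertex `uⁱ`
(threshold `θ^i(u)` if `u ∈ V^i`, and 1 otherwise, i.e. for dummy vertices). -/
noncomputable def cliqueTheta {U : Type*} [DecidableEq U] {k : ℕ}
    (Vmem : Fin k → Finset U) (θ : Fin k → U → ℝ) : U × Option (Fin k) → ℝ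
  | (_, none) => 1
  | (u, some i) => if u ∈ Vmem i then θ i u else 1

/-- Edge weights of the clique lossless coupled network:
`w(u⁰, vⁱ) = w^i(u, v)` for users `u ≠ v` and `1 ≤ i ≤ k`;
`w(uⁱ, uʲ) = θ(uʲ)` for all `0 ≤ i ≠ j ≤ k` (synchronization clique);
all other weights are 0. -/
noncomputable def cliqueW {U : Type*} [DecidableEq U] {k : ℕ}
    (Vmem : Fin k → Finset U) (w : Fin k → U → U → ℝ) (θ : Fin k → U → ℝ) :
    U × Option (Fin k) → U × Option (Fin k) → ℝ :=
  fun x y =>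
    if x.1 = y.1 then
      if x.2 = y.2 then 0 else cliqueTheta Vmem θ y
    else
      match x.2, y.2 with
      | none, some i => w i x.1 y.1
      | _, _ => 0

section Aux

variable {V : Type*} [Fintype V] [DecidableEq V]
  (w : V → V → ℝ) (θ : V → ℝ) (S : Finset V)

lemma ltIter_succ_subset (t : ℕ) : ltIter w θ S t ⊆ ltIter w θ S (t + 1) := by
  rw [ltIter]; exact Finset.subset_union_left

lemma ltIter_mono {s t : ℕ} (h : s ≤ t) : ltIter w θ S s ⊆ ltIter w θ S t := by
  induction t with
  | zero => simp_all
  | succ t ih =>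
    rcases Nat.lt_or_ge s (t + 1) with h' | h'
    · exact (ih (Nat.lt_succ_iff.mp h')).trans (ltIter_succ_subset w θ S t)
    · have : s = t + 1 := le_antisymm h h'
      subst this; exact subset_rfl

lemma ltIter_activate {t : ℕ} {x : V}
    (h : θ x ≤ ∑ y ∈ ltIter w θ S t, w y x) : x ∈ ltIter w θ S (t + 1) := by
  rw [ltIter]
  exact Finset.mem_union_right _ (Finset.mem_filter.mpr ⟨Finset.mem_univ x, h⟩)

end Aux

/-- If the LT propagation on the multiplex system starts from `S`
and the propagation on its clique lossless coupled network starts from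
`S' = { s⁰ : s ∈ S }`, then for every `d ≥ 1` and every user `u`, if
`u ∈ A^d(G^{1..k}, S)` then some representative vertex `uⁱ` belongs to
`A^{2d-1}(G, S')`. -/
theorem multi_active_implies_rep_active
    {U : Type*} [Fintype U] [DecidableEq U] {k : ℕ} (hk : 1 ≤ k)
    (Vmem : Fin k → Finset U) (w : Fin k → U → U → ℝ) (θ : Fin k → U → ℝ)
    (hw0 : ∀ i v u, 0 ≤ w i v u)
    (hwV : ∀ i v u, v ∉ Vmem i ∨ u ∉ Vmem i → w i v u = 0)
    (hθpos : ∀ i u, 0 < θ i u)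
    (S : Finset U) (d : ℕ) (hd : 1 ≤ d) (u : U)
    (hu : u ∈ multiIter w θ S d) :
    ∃ i : Fin k, (u, (some i : Option (Fin k))) ∈
      ltIter (cliqueW Vmem w θ) (cliqueTheta Vmem θ)
        (S.image (fun s => (s, (none : Option (Fin k))))) (2 * d - 1) := by

  set Θ := cliqueTheta Vmem θ with hΘdef
  set W := cliqueW Vmem w θ with hWdef
  set S' := S.image (fun s => (s, (none : Option (Fin k)))) with hS'def
  have hΘnn : ∀ x, (0:ℝ) ≤ Θ x := by
    rintro ⟨a, (_ | i)⟩
    · norm_num [hΘdef, cliqueTheta]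
    · simp only [hΘdef, cliqueTheta]
      split
      · exact (hθpos _ _).le
      · norm_num
  have hWnn : ∀ x y, (0:ℝ) ≤ W x y := by
    rintro ⟨xa, xo⟩ ⟨ya, yo⟩
    by_cases hxy : xa = ya
    · by_cases ho : xo = yo
      · simp [hWdef, cliqueW, hxy, ho]
      · simpa [hWdef, cliqueW, hxy, ho] using hΘnn (ya, yo)
    · rcases xo with _ | i <;> rcases yo with _ | j <;>
        simp [hWdef, cliqueW, hxy]
      exact hw0 _ _ _
  have sync : ∀ t (a : U) (x y : Option (Fin k)), x ≠ y →
      (a, x) ∈ ltIter W Θ S' t → (a, y) ∈ ltIter W Θ S' (t + 1) := by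
    intro t a x y hxy hm
    apply ltIter_activate
    have h1 : W (a, x) (a, y) = Θ (a, y) := by
      simp [hWdef, cliqueW, hxy, hΘdef]
    calc Θ (a, y) = W (a, x) (a, y) := h1.symm
      _ ≤ ∑ z ∈ ltIter W Θ S' t, W z (a, y) :=
          Finset.single_le_sum (fun z _ => hWnn z _) hm
  have rep : ∀ t, (∀ v ∈ multiIter w θ S t,
        (v, (none : Option (Fin k))) ∈ ltIter W Θ S' (2 * t)) →
      ∀ v ∈ multiIter w θ S (t + 1),
        ∃ i : Fin k, (v, (some i : Option (Fin k))) ∈ ltIter W Θ S' (2 * t + 1) := by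
    intro t gate v hv
    by_cases hvt : v ∈ multiIter w θ S t
    · exact ⟨⟨0, hk⟩, sync (2 * t) v none (some ⟨0, hk⟩) (by simp) (gate v hvt)⟩
    · rw [multiIter] at hv
      rcases Finset.mem_union.mp hv with h | h
      · exact absurd h hvt
      obtain ⟨i, hi⟩ := (Finset.mem_filter.mp h).2
      have hVi : v ∈ Vmem i := by
        by_contra hnot
        have hz : ∑ x ∈ multiIter w θ S t, w i x v = 0 :=
          Finset.sum_eq_zero fun x _ => hwV i x v (Or.inr hnot)
        rw [hz] at hi
        exact absurd hi (not_le.mpr (hθpos i v))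
      refine ⟨i, ltIter_activate _ _ _ ?_⟩
      have hΘv : Θ (v, (some i : Option (Fin k))) = θ i v := by
        simp [hΘdef, cliqueTheta, hVi]
      rw [hΘv]
      have hinj : ∀ x ∈ multiIter w θ S t, ∀ y ∈ multiIter w θ S t,
          (x, (none : Option (Fin k))) = (y, (none : Option (Fin k))) → x = y := by
        intro x _ y _ hxy
        exact (Prod.mk.injEq _ _ _ _ ▸ hxy).1
      calc θ i v ≤ ∑ x ∈ multiIter w θ S t, w i x v := hi
        _ = ∑ x ∈ multiIter w θ S t, W (x, (none : Option (Fin k))) (v, some i) := by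
            refine Finset.sum_congr rfl fun x hx => ?_
            have hxv : x ≠ v := fun hxveq => hvt (hxveq ▸ hx)
            simp [hWdef, cliqueW, hxv]
        _ = ∑ p ∈ (multiIter w θ S t).image
              (fun s => (s, (none : Option (Fin k)))), W p (v, some i) :=
            (by rw [Finset.sum_image hinj])
        _ ≤ ∑ p ∈ ltIter W Θ S' (2 * t), W p (v, some i) := by
            refine Finset.sum_le_sum_of_subset_of_nonneg ?_ fun p _ _ => hWnn p _
            intro p hp
            obtain ⟨x, hx, rfl⟩ := Finset.mem_image.mp hp
            exact gate x hx
  have gate : ∀ t, ∀ v ∈ multiIter w θ S t,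
      (v, (none : Option (Fin k))) ∈ ltIter W Θ S' (2 * t) := by
    intro t
    induction t with
    | zero =>
      intro v hv
      exact Finset.mem_image_of_mem _ hv
    | succ t ih =>
      intro v hv
      obtain ⟨i, hi⟩ := rep t ih v hv
      have h2 : 2 * (t + 1) = (2 * t + 1) + 1 := by ring
      rw [h2]
      exact sync (2 * t + 1) v (some i) none (by simp) hi
  obtain ⟨d', rfl⟩ : ∃ d', d = d' + 1 := ⟨d - 1, (Nat.succ_pred_eq_of_pos hd).symm⟩
  obtain ⟨i, hi⟩ := rep d' (gate d') u hu
  have h3 : 2 * (d' + 1) - 1 = 2 * d' + 1 := by omega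
  rw [h3]
  exact ⟨i, hi⟩
end

section
/- Let the LT propagation on the multiplex system G^{1..k} start from a seed set S ⊆ U and the LT propagation on its clique lossless coupled network G start from S' = { s^0 : s ∈ S }. Then for every d ≥ 1 and every user u, the following three conditions are equivalent: (1) u ∈ A^d(G^{1..k},S); (2) there exists i ∈ {1,…,k} such that the representative vertex u^i belongs to A^{2d-1}(G,S'); (3) the gateway vertex u^0 belongs to A^{2d}(G,S'). -/
open scoped Classical

/-! One multiplex round takes two rounds of the coupled network.  Invariant: after round `2m`
the active gateways are exactly the users active after multiplex round `m`, and every active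
representative belongs to such a user.  In the odd round a representative `uⁱ` with no other
active vertex of `u` receives weight only from the gateways of active users, weighted by `w^i`,
so it fires iff `u` fires in layer `i`; if `u⁰` is already active, the clique edges fire all
representatives of `u`.  In the even round a gateway fires as soon as one representative of its
user is active (clique edge of weight 1), while representatives still see the same gateways, so
no new user appears and the invariant is restored. -/

noncomputable def ltStep {V : Type*} [Fintype V] [DecidableEq V] (w : V → V → ℝ) (θ : V → ℝ)
    (B : Finset V) : Finset V :=
  B ∪ Finset.univ.filter (fun x => θ x ≤ ∑ y ∈ B, w y x)

theorem ltIter_succ {V : Type*} [Fintype V] [DecidableEq V] (w : V → V → ℝ) (θ : V → ℝ)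
    (S : Finset V) (t : ℕ) : ltIter w θ S (t + 1) = ltStep w θ (ltIter w θ S t) :=
  rfl

section Multiplex

variable {U : Type*} [Fintype U] [DecidableEq U] {k : ℕ}

noncomputable def multiStep (w : Fin k → U → U → ℝ) (θ : Fin k → U → ℝ) (M : Finset U) :
    Finset U :=
  M ∪ Finset.univ.filter (fun u => ∃ i : Fin k, θ i u ≤ ∑ v ∈ M, w i v u)

theorem multiIter_succ (w : Fin k → U → U → ℝ) (θ : Fin k → U → ℝ) (S : Finset U) (t : ℕ) :
    multiIter w θ S (t + 1) = multiStep w θ (multiIter w θ S t) :=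
  rfl

theorem subset_multiStep (w : Fin k → U → U → ℝ) (θ : Fin k → U → ℝ) (M : Finset U) :
    M ⊆ multiStep w θ M :=
  Finset.subset_union_left

end Multiplex

section Coupled

variable {U : Type*} {k : ℕ}

noncomputable def gateways (B : Finset (U × Option (Fin k))) : Finset U :=
  B.preimage (fun v => (v, none)) (Prod.mk_left_injective none).injOn

@[simp]
theorem mem_gateways {B : Finset (U × Option (Fin k))} {u : U} :
    u ∈ gateways B ↔ (u, none) ∈ B :=
  Finset.mem_preimage

variable [DecidableEq U] (Vmem : Fin k → Finset U) (w : Fin k → U → U → ℝ)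
  (θ : Fin k → U → ℝ)

theorem cliqueW_apply_gateway (v u : U) (o : Option (Fin k)) :
    cliqueW Vmem w θ (v, o) (u, none) = if v = u ∧ o ≠ none then 1 else 0 := by
  cases o <;> simp [cliqueW, cliqueTheta]

theorem cliqueW_apply_representative (v u : U) (o : Option (Fin k)) (i : Fin k) :
    cliqueW Vmem w θ (v, o) (u, some i) =
      if v = u then (if o = some i then 0 else cliqueTheta Vmem θ (u, some i))
      else (if o = none then w i v u else 0) := by
  cases o <;> simp [cliqueW]

theorem cliqueTheta_pos (hθpos : ∀ i u, 0 < θ i u) (x : U × Option (Fin k)) :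
    0 < cliqueTheta Vmem θ x := by
  rcases x with ⟨u, _ | i⟩
  · exact one_pos
  · simp only [cliqueTheta]
    split_ifs
    exacts [hθpos i u, one_pos]

theorem cliqueW_nonneg (hw0 : ∀ i v u, 0 ≤ w i v u) (hθpos : ∀ i u, 0 < θ i u)
    (x y : U × Option (Fin k)) : 0 ≤ cliqueW Vmem w θ x y := by
  rcases x with ⟨v, o⟩
  rcases y with ⟨u, _ | i⟩
  · rw [cliqueW_apply_gateway]; split_ifs <;> norm_num
  · rw [cliqueW_apply_representative]
    split_ifs
    exacts [le_rfl, (cliqueTheta_pos Vmem θ hθpos _).le, hw0 _ _ _, le_rfl]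

/-- On a dummy vertex (`u ∉ V^i`) both inequalities fail: the threshold there is 1 and the
layer-`i` weights into `u` vanish. -/
theorem cliqueTheta_le_sum_iff (hwV : ∀ i v u, v ∉ Vmem i ∨ u ∉ Vmem i → w i v u = 0)
    (hθpos : ∀ i u, 0 < θ i u) (i : Fin k) (u : U) (M : Finset U) :
    cliqueTheta Vmem θ (u, some i) ≤ ∑ v ∈ M, w i v u ↔ θ i u ≤ ∑ v ∈ M, w i v u := by
  by_cases hu : u ∈ Vmem i
  · simp [cliqueTheta, hu]
  · have hzero : ∑ v ∈ M, w i v u = 0 :=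
      Finset.sum_eq_zero fun v _ => hwV i v u (Or.inr hu)
    simp only [cliqueTheta, hu, if_false, hzero]
    constructor <;> intro h <;> linarith [hθpos i u]

theorem sum_gateways_eq (B : Finset (U × Option (Fin k))) (u : U) (i : Fin k)
    (hu : (u, none) ∉ B) :
    ∑ v ∈ gateways B, w i v u = ∑ v ∈ gateways B, cliqueW Vmem w θ (v, none) (u, some i) := by
  refine Finset.sum_congr rfl fun v hv => ?_
  have hvu : v ≠ u := by rintro rfl; exact hu (mem_gateways.mp hv)
  simp [cliqueW_apply_representative, hvu]

theorem sum_cliqueW_representative_eq (B : Finset (U × Option (Fin k))) (u : U) (i : Fin k)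
    (hB : ∀ o, (u, o) ∈ B → o = some i) :
    ∑ y ∈ B, cliqueW Vmem w θ y (u, some i) = ∑ v ∈ gateways B, w i v u := by
  have hu : (u, none) ∉ B := fun h => Option.some_ne_none i (hB none h).symm
  rw [sum_gateways_eq Vmem w θ B u i hu]
  refine (Finset.sum_preimage _ B _ (fun y => cliqueW Vmem w θ y (u, some i)) ?_).symm
  rintro ⟨v, _ | j⟩ hy hrange
  · exact absurd ⟨v, rfl⟩ hrange
  · by_cases hvu : v = u
    · subst hvu
      simp [cliqueW_apply_representative, hB _ hy]
    · simp [cliqueW_apply_representative, hvu]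

theorem sum_gateways_le_sum_cliqueW (hw0 : ∀ i v u, 0 ≤ w i v u) (hθpos : ∀ i u, 0 < θ i u)
    (B : Finset (U × Option (Fin k))) (u : U) (i : Fin k) (hu : (u, none) ∉ B) :
    ∑ v ∈ gateways B, w i v u ≤ ∑ y ∈ B, cliqueW Vmem w θ y (u, some i) := by
  rw [sum_gateways_eq Vmem w θ B u i hu, gateways,
    Finset.sum_preimage' _ B _ (fun y => cliqueW Vmem w θ y (u, some i))]
  exact Finset.sum_le_sum_of_subset_of_nonneg (Finset.filter_subset _ _)
    fun y _ _ => cliqueW_nonneg Vmem w θ hw0 hθpos y _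

theorem cliqueTheta_le_sum_cliqueW (hw0 : ∀ i v u, 0 ≤ w i v u) (hθpos : ∀ i u, 0 < θ i u)
    (B : Finset (U × Option (Fin k))) (u : U) (i : Fin k) {o : Option (Fin k)}
    (ho : o ≠ some i) (hB : (u, o) ∈ B) :
    cliqueTheta Vmem θ (u, some i) ≤ ∑ y ∈ B, cliqueW Vmem w θ y (u, some i) := by
  have hterm : cliqueW Vmem w θ (u, o) (u, some i) = cliqueTheta Vmem θ (u, some i) := by
    simp [cliqueW_apply_representative, ho]
  exact hterm ▸ Finset.single_le_sum (fun y _ => cliqueW_nonneg Vmem w θ hw0 hθpos y _) hB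

variable [Fintype U]

noncomputable def representatives (B : Finset (U × Option (Fin k))) : Finset U :=
  Finset.univ.filter (fun v => ∃ i, (v, some i) ∈ B)

@[simp]
theorem mem_representatives {B : Finset (U × Option (Fin k))} {u : U} :
    u ∈ representatives B ↔ ∃ i, (u, some i) ∈ B := by
  simp [representatives]

theorem one_le_sum_cliqueW_gateway_iff (B : Finset (U × Option (Fin k))) (u : U) :
    1 ≤ ∑ y ∈ B, cliqueW Vmem w θ y (u, none) ↔ u ∈ representatives B := by
  have hsum : ∑ y ∈ B, cliqueW Vmem w θ y (u, none) =
      ((B.filter fun y => y.1 = u ∧ y.2 ≠ none).card : ℝ) := by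
    rw [Finset.natCast_card_filter]
    exact Finset.sum_congr rfl fun y _ => cliqueW_apply_gateway Vmem w θ y.1 u y.2
  rw [hsum, Nat.one_le_cast, Finset.one_le_card, Finset.filter_nonempty_iff,
    mem_representatives]
  constructor
  · rintro ⟨⟨v, o⟩, hy, rfl, ho⟩
    obtain ⟨i, rfl⟩ := Option.ne_none_iff_exists'.mp ho
    exact ⟨i, hy⟩
  · rintro ⟨i, hi⟩
    exact ⟨_, hi, rfl, Option.some_ne_none i⟩

theorem gateways_ltStep (B : Finset (U × Option (Fin k))) :
    gateways (ltStep (cliqueW Vmem w θ) (cliqueTheta Vmem θ) B) =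
      gateways B ∪ representatives B := by
  ext u
  simp only [ltStep, mem_gateways, Finset.mem_union, Finset.mem_filter, Finset.mem_univ,
    true_and]
  rw [show cliqueTheta Vmem θ (u, none) = 1 from rfl, one_le_sum_cliqueW_gateway_iff]

theorem representatives_ltStep_subset (hwV : ∀ i v u, v ∉ Vmem i ∨ u ∉ Vmem i → w i v u = 0)
    (hθpos : ∀ i u, 0 < θ i u) (B : Finset (U × Option (Fin k))) :
    representatives (ltStep (cliqueW Vmem w θ) (cliqueTheta Vmem θ) B) ⊆
      representatives B ∪ multiStep w θ (gateways B) := by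
  intro u hu
  obtain ⟨i, hi⟩ := mem_representatives.mp hu
  rcases Finset.mem_union.mp hi with hB | hfire
  · exact Finset.mem_union_left _ (mem_representatives.mpr ⟨i, hB⟩)
  by_cases hsync : ∀ o, (u, o) ∈ B → o = some i
  · have hθ : θ i u ≤ ∑ v ∈ gateways B, w i v u := by
      rw [← cliqueTheta_le_sum_iff Vmem w θ hwV hθpos,
        ← sum_cliqueW_representative_eq Vmem w θ B u i hsync]
      exact (Finset.mem_filter.mp hfire).2
    exact Finset.mem_union_right _
      (Finset.mem_union_right _ (Finset.mem_filter.mpr ⟨Finset.mem_univ _, i, hθ⟩))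
  · push Not at hsync
    obtain ⟨o, hB, -⟩ := hsync
    rcases o with _ | j
    · exact Finset.mem_union_right _ (subset_multiStep w θ _ (mem_gateways.mpr hB))
    · exact Finset.mem_union_left _ (mem_representatives.mpr ⟨j, hB⟩)

theorem multiStep_subset_representatives_ltStep (hk : 1 ≤ k) (hw0 : ∀ i v u, 0 ≤ w i v u)
    (hwV : ∀ i v u, v ∉ Vmem i ∨ u ∉ Vmem i → w i v u = 0) (hθpos : ∀ i u, 0 < θ i u)
    (B : Finset (U × Option (Fin k))) :
    multiStep w θ (gateways B) ⊆
      representatives (ltStep (cliqueW Vmem w θ) (cliqueTheta Vmem θ) B) := by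
  intro u hu
  rw [mem_representatives]
  by_cases hgate : (u, none) ∈ B
  · refine ⟨⟨0, hk⟩, Finset.mem_union_right _ (Finset.mem_filter.mpr ⟨Finset.mem_univ _, ?_⟩)⟩
    exact cliqueTheta_le_sum_cliqueW Vmem w θ hw0 hθpos B u _ (Option.some_ne_none _).symm hgate
  · obtain ⟨i, hi⟩ : ∃ i, θ i u ≤ ∑ v ∈ gateways B, w i v u := by
      simpa [multiStep, hgate] using hu
    refine ⟨i, Finset.mem_union_right _ (Finset.mem_filter.mpr ⟨Finset.mem_univ _, ?_⟩)⟩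
    exact ((cliqueTheta_le_sum_iff Vmem w θ hwV hθpos i u _).mpr hi).trans
      (sum_gateways_le_sum_cliqueW Vmem w θ hw0 hθpos B u i hgate)

theorem clique_odd_round (hk : 1 ≤ k) (hw0 : ∀ i v u, 0 ≤ w i v u)
    (hwV : ∀ i v u, v ∉ Vmem i ∨ u ∉ Vmem i → w i v u = 0) (hθpos : ∀ i u, 0 < θ i u)
    {B : Finset (U × Option (Fin k))} {M : Finset U}
    (hg : gateways B = M) (hr : representatives B ⊆ M) :
    gateways (ltStep (cliqueW Vmem w θ) (cliqueTheta Vmem θ) B) = M ∧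
      representatives (ltStep (cliqueW Vmem w θ) (cliqueTheta Vmem θ) B) = multiStep w θ M := by
  subst hg
  refine ⟨by rw [gateways_ltStep, Finset.union_eq_left.mpr hr], subset_antisymm ?_
    (multiStep_subset_representatives_ltStep Vmem w θ hk hw0 hwV hθpos B)⟩
  exact (representatives_ltStep_subset Vmem w θ hwV hθpos B).trans
    (Finset.union_subset (hr.trans (subset_multiStep w θ _)) subset_rfl)

theorem clique_even_round (hwV : ∀ i v u, v ∉ Vmem i ∨ u ∉ Vmem i → w i v u = 0)
    (hθpos : ∀ i u, 0 < θ i u) {B : Finset (U × Option (Fin k))} {M : Finset U}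
    (hg : gateways B = M) (hr : representatives B = multiStep w θ M) :
    gateways (ltStep (cliqueW Vmem w θ) (cliqueTheta Vmem θ) B) = multiStep w θ M ∧
      representatives (ltStep (cliqueW Vmem w θ) (cliqueTheta Vmem θ) B) ⊆
        multiStep w θ M := by
  subst hg
  refine ⟨by rw [gateways_ltStep, hr, Finset.union_eq_right.mpr (subset_multiStep w θ _)], ?_⟩
  have := representatives_ltStep_subset Vmem w θ hwV hθpos B
  rwa [hr, Finset.union_self] at this

theorem clique_ltIter_two_mul (hk : 1 ≤ k) (hw0 : ∀ i v u, 0 ≤ w i v u)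
    (hwV : ∀ i v u, v ∉ Vmem i ∨ u ∉ Vmem i → w i v u = 0) (hθpos : ∀ i u, 0 < θ i u)
    (S : Finset U) (m : ℕ) :
    gateways (ltIter (cliqueW Vmem w θ) (cliqueTheta Vmem θ)
        (S.image fun s => (s, (none : Option (Fin k)))) (2 * m)) = multiIter w θ S m ∧
      representatives (ltIter (cliqueW Vmem w θ) (cliqueTheta Vmem θ)
        (S.image fun s => (s, (none : Option (Fin k)))) (2 * m)) ⊆ multiIter w θ S m := by
  induction m with
  | zero => exact ⟨by ext; simp [ltIter, multiIter], fun u => by simp [ltIter]⟩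
  | succ m ih =>
    rw [show 2 * (m + 1) = 2 * m + 1 + 1 by ring, ltIter_succ, ltIter_succ, multiIter_succ]
    obtain ⟨hg, hr⟩ := clique_odd_round Vmem w θ hk hw0 hwV hθpos ih.1 ih.2
    exact clique_even_round Vmem w θ hwV hθpos hg hr

end Coupled

/-- **Lemma 2.** With the LT propagation on the multiplex system
starting from `S` and on its clique lossless coupled network starting from
`S' = { s⁰ : s ∈ S }`, for every `d ≥ 1` and every user `u` the following are
equivalent: (1) `u ∈ A^d(G^{1..k}, S)`; (2) some representative vertex `uⁱ` is in
`A^{2d-1}(G, S')`; (3) the gateway vertex `u⁰` is in `A^{2d}(G, S')`. -/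
theorem lossless_mapping_equiv
    {U : Type*} [Fintype U] [DecidableEq U] {k : ℕ} (hk : 1 ≤ k)
    (Vmem : Fin k → Finset U) (w : Fin k → U → U → ℝ) (θ : Fin k → U → ℝ)
    (hw0 : ∀ i v u, 0 ≤ w i v u)
    (hwV : ∀ i v u, v ∉ Vmem i ∨ u ∉ Vmem i → w i v u = 0)
    (hθpos : ∀ i u, 0 < θ i u)
    (S : Finset U) (d : ℕ) (hd : 1 ≤ d) (u : U) :
    (u ∈ multiIter w θ S d ↔
      ∃ i : Fin k, (u, (some i : Option (Fin k))) ∈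
        ltIter (cliqueW Vmem w θ) (cliqueTheta Vmem θ)
          (S.image (fun s => (s, (none : Option (Fin k))))) (2 * d - 1)) ∧
    ((∃ i : Fin k, (u, (some i : Option (Fin k))) ∈
        ltIter (cliqueW Vmem w θ) (cliqueTheta Vmem θ)
          (S.image (fun s => (s, (none : Option (Fin k))))) (2 * d - 1)) ↔
      (u, (none : Option (Fin k))) ∈
        ltIter (cliqueW Vmem w θ) (cliqueTheta Vmem θ)
          (S.image (fun s => (s, (none : Option (Fin k))))) (2 * d)) := by
  obtain ⟨m, rfl⟩ : ∃ m, d = m + 1 := ⟨d - 1, by omega⟩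
  obtain ⟨hg, hr⟩ := clique_ltIter_two_mul Vmem w θ hk hw0 hwV hθpos S m
  obtain ⟨hg₁, hr₁⟩ := clique_odd_round Vmem w θ hk hw0 hwV hθpos hg hr
  obtain ⟨hg₂, -⟩ := clique_even_round Vmem w θ hwV hθpos hg₁ hr₁
  rw [show 2 * (m + 1) - 1 = 2 * m + 1 by omega, show 2 * (m + 1) = 2 * m + 1 + 1 by ring]
  simp only [← mem_representatives, ← mem_gateways, ltIter_succ, hr₁, hg₂, multiIter_succ,
    iff_self, and_self]
end

section
/- Let 0 < β ≤ 1 and d ≥ 1. When the clique lossless coupling scheme is used, a set S = {s_1,…,s_p} ⊆ U influences at least a β fraction of users in G^{1..k} after d propagation hops (i.e., |A^d(G^{1..k},S)| ≥ β·|U|) if and only if S' = {s_1^0,…,s_p^0} influences at least a β fraction of vertices in the coupled network G after 2d propagation hops (i.e., |A^{2d}(G,S')| ≥ β·|V| where |V| = (k+1)·|U|). -/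
open scoped Classical

/-!
Each hop of the multiplex system is simulated by two hops of the coupled network. If the active
vertices are exactly the copies of the active users `T` (or, initially, just their gateways),
the next hop activates all copies of `T` through the synchronization cliques, together with
every representative `uⁱ` for which `θ^i(u) ≤ Σ_{v ∈ T} w^i(v, u)`: only gateways carry weight
between different users, and a dummy representative receives no weight at all. One more hop
through the cliques then makes all copies of these users active, and no others. Hence after
`2d` hops the active vertices are exactly the `k + 1` copies of the users active after `d`
hops, and both fractions are the same number.
-/

open Finset

lemma mem_ltIter_succ {V : Type*} [Fintype V] [DecidableEq V] {w : V → V → ℝ} {θ : V → ℝ}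
    {S : Finset V} {t : ℕ} {x : V} :
    x ∈ ltIter w θ S (t + 1) ↔ x ∈ ltIter w θ S t ∨ θ x ≤ ∑ y ∈ ltIter w θ S t, w y x := by
  simp [ltIter]

lemma mem_multiIter_succ {U : Type*} [Fintype U] [DecidableEq U] {k : ℕ}
    {w : Fin k → U → U → ℝ} {θ : Fin k → U → ℝ} {S : Finset U} {t : ℕ} {u : U} :
    u ∈ multiIter w θ S (t + 1) ↔
      u ∈ multiIter w θ S t ∨ ∃ i, θ i u ≤ ∑ v ∈ multiIter w θ S t, w i v u := by
  simp [multiIter]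

namespace CliqueCoupling

variable {U : Type*} [DecidableEq U] {k : ℕ} {Vmem : Fin k → Finset U}
  {w : Fin k → U → U → ℝ} {θ : Fin k → U → ℝ}

def gateways [Fintype U] (X : Finset (U × Option (Fin k))) : Finset U :=
  univ.filter fun v => (v, none) ∈ X

@[simp]
lemma mem_gateways [Fintype U] {X : Finset (U × Option (Fin k))} {v : U} :
    v ∈ gateways X ↔ (v, none) ∈ X := by
  simp [gateways]

lemma cliqueTheta_pos (hθ : ∀ i u, 0 < θ i u) (x : U × Option (Fin k)) :
    0 < cliqueTheta Vmem θ x := by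
  rcases x with ⟨u, _ | i⟩
  · simp [cliqueTheta]
  · by_cases hu : u ∈ Vmem i <;> simp [cliqueTheta, hu, hθ]

lemma cliqueW_nonneg (hw0 : ∀ i v u, 0 ≤ w i v u) (hθ : ∀ i u, 0 < θ i u)
    (x y : U × Option (Fin k)) : 0 ≤ cliqueW Vmem w θ x y := by
  rcases x with ⟨v, c⟩
  rcases y with ⟨u, j⟩
  by_cases hvu : v = u
  · by_cases hcj : c = j <;> simp [cliqueW, hvu, hcj, (cliqueTheta_pos hθ (u, j)).le]
  · cases c <;> cases j <;> simp [cliqueW, hvu, hw0]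

lemma cliqueTheta_le_sum_of_mem (hw0 : ∀ i v u, 0 ≤ w i v u) (hθ : ∀ i u, 0 < θ i u)
    {X : Finset (U × Option (Fin k))} {u : U} {c j : Option (Fin k)} (hX : (u, c) ∈ X)
    (hcj : c ≠ j) :
    cliqueTheta Vmem θ (u, j) ≤ ∑ y ∈ X, cliqueW Vmem w θ y (u, j) :=
  calc cliqueTheta Vmem θ (u, j) = cliqueW Vmem w θ (u, c) (u, j) := by simp [cliqueW, hcj]
    _ ≤ ∑ y ∈ X, cliqueW Vmem w θ y (u, j) :=
      single_le_sum (fun y _ => cliqueW_nonneg hw0 hθ y (u, j)) hX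

lemma sum_cliqueW_gateway_of_forall_notMem {X : Finset (U × Option (Fin k))} {u : U}
    (hX : ∀ c, (u, c) ∉ X) : ∑ y ∈ X, cliqueW Vmem w θ y (u, none) = 0 := by
  refine sum_eq_zero fun ⟨v, c⟩ hy => ?_
  have hvu : v ≠ u := by rintro rfl; exact hX c hy
  cases c <;> simp [cliqueW, hvu]

lemma sum_cliqueW_rep_of_forall_notMem [Fintype U] {X : Finset (U × Option (Fin k))} {u : U}
    (hX : ∀ c, (u, c) ∉ X) (i : Fin k) :
    ∑ y ∈ X, cliqueW Vmem w θ y (u, some i) = ∑ v ∈ gateways X, w i v u := by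
  have hne : ∀ y ∈ X, y.1 ≠ u := by rintro ⟨v, c⟩ hy rfl; exact hX c hy
  have hsub : (gateways X).image (·, none) ⊆ X := by
    intro y hy
    obtain ⟨v, hv, rfl⟩ := mem_image.1 hy
    exact mem_gateways.1 hv
  rw [← sum_subset hsub, sum_image fun _ _ _ _ h => congrArg Prod.fst h]
  · refine sum_congr rfl fun v hv => ?_
    simp [cliqueW, hne _ (mem_gateways.1 hv)]
  · rintro ⟨v, c⟩ hy hyg
    cases c with
    | none => exact absurd (mem_image.2 ⟨v, mem_gateways.2 hy, rfl⟩) hyg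
    | some _ => simp [cliqueW, hne _ hy]

/-- For `u ∉ V^i` both sides fail: the threshold of the dummy vertex `uⁱ` is `1`, the sum is `0`. -/
lemma cliqueTheta_some_le_sum_iff (hwV : ∀ i v u, v ∉ Vmem i ∨ u ∉ Vmem i → w i v u = 0)
    (hθ : ∀ i u, 0 < θ i u) (T : Finset U) (u : U) (i : Fin k) :
    cliqueTheta Vmem θ (u, some i) ≤ ∑ v ∈ T, w i v u ↔ θ i u ≤ ∑ v ∈ T, w i v u := by
  by_cases hu : u ∈ Vmem i
  · simp [cliqueTheta, hu]
  · have hzero : ∑ v ∈ T, w i v u = 0 := sum_eq_zero fun v _ => hwV i v u (Or.inr hu)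
    simp [cliqueTheta, hu, hzero, (hθ i u).not_ge]

lemma cliqueTheta_le_sum_iff_of_forall_notMem [Fintype U]
    (hwV : ∀ i v u, v ∉ Vmem i ∨ u ∉ Vmem i → w i v u = 0) (hθ : ∀ i u, 0 < θ i u)
    {X : Finset (U × Option (Fin k))} {u : U} (hX : ∀ c, (u, c) ∉ X) (j : Option (Fin k)) :
    cliqueTheta Vmem θ (u, j) ≤ ∑ y ∈ X, cliqueW Vmem w θ y (u, j) ↔
      ∃ i, j = some i ∧ θ i u ≤ ∑ v ∈ gateways X, w i v u := by
  cases j with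
  | none =>
    simp [sum_cliqueW_gateway_of_forall_notMem hX, (cliqueTheta_pos hθ (u, none)).not_ge]
  | some i =>
    simp [sum_cliqueW_rep_of_forall_notMem hX, cliqueTheta_some_le_sum_iff hwV hθ]

variable [Fintype U] {S' : Finset (U × Option (Fin k))} {t : ℕ} {T : Finset U}

local notation "L" => ltIter (cliqueW Vmem w θ) (cliqueTheta Vmem θ) S'

lemma mem_ltIter_succ_of_gateways_eq (hw0 : ∀ i v u, 0 ≤ w i v u)
    (hwV : ∀ i v u, v ∉ Vmem i ∨ u ∉ Vmem i → w i v u = 0) (hθ : ∀ i u, 0 < θ i u)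
    (hgw : gateways (L t) = T) (hT : ∀ y ∈ L t, y.1 ∈ T) (u : U) (j : Option (Fin k)) :
    (u, j) ∈ L (t + 1) ↔ u ∈ T ∨ ∃ i, j = some i ∧ θ i u ≤ ∑ v ∈ T, w i v u := by
  rw [mem_ltIter_succ]
  by_cases hu : u ∈ T
  · have hgu : (u, none) ∈ L t := mem_gateways.1 (hgw ▸ hu)
    simp only [hu, true_or, iff_true]
    by_cases hj : j = none
    · exact .inl (hj ▸ hgu)
    · exact .inr (cliqueTheta_le_sum_of_mem hw0 hθ hgu (Ne.symm hj))
  · have hX : ∀ c, (u, c) ∉ L t := fun c hc => hu (hT _ hc)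
    rw [cliqueTheta_le_sum_iff_of_forall_notMem hwV hθ hX, hgw]
    simp [hu, hX]

lemma mem_ltIter_succ_of_mem_iff (hw0 : ∀ i v u, 0 ≤ w i v u)
    (hwV : ∀ i v u, v ∉ Vmem i ∨ u ∉ Vmem i → w i v u = 0) (hθ : ∀ i u, 0 < θ i u)
    (hgw : gateways (L t) = T)
    (hL : ∀ u j, (u, j) ∈ L t ↔ u ∈ T ∨ ∃ i, j = some i ∧ θ i u ≤ ∑ v ∈ T, w i v u)
    (u : U) (j : Option (Fin k)) :
    (u, j) ∈ L (t + 1) ↔ u ∈ T ∨ ∃ i, θ i u ≤ ∑ v ∈ T, w i v u := by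
  rw [mem_ltIter_succ]
  by_cases hcopy : ∃ c, (u, c) ∈ L t
  · obtain ⟨c, hc⟩ := hcopy
    refine iff_of_true ?_ ?_
    · by_cases hcj : c = j
      · exact .inl (hcj ▸ hc)
      · exact .inr (cliqueTheta_le_sum_of_mem hw0 hθ hc hcj)
    · rcases (hL u c).1 hc with hu | ⟨i, -, hi⟩
      exacts [.inl hu, .inr ⟨i, hi⟩]
  · simp only [not_exists] at hcopy
    have huT : u ∉ T := fun hu => hcopy none ((hL u none).2 (.inl hu))
    have hi : ∀ i, ¬θ i u ≤ ∑ v ∈ T, w i v u :=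
      fun i hi => hcopy (some i) ((hL u _).2 (.inr ⟨i, rfl, hi⟩))
    rw [cliqueTheta_le_sum_iff_of_forall_notMem hwV hθ hcopy, hgw]
    simp [hcopy, huT, hi]

lemma mem_ltIter_add_two (hw0 : ∀ i v u, 0 ≤ w i v u)
    (hwV : ∀ i v u, v ∉ Vmem i ∨ u ∉ Vmem i → w i v u = 0) (hθ : ∀ i u, 0 < θ i u)
    (hgw : gateways (L t) = T) (hT : ∀ y ∈ L t, y.1 ∈ T) (u : U) (j : Option (Fin k)) :
    (u, j) ∈ L (t + 2) ↔ u ∈ T ∨ ∃ i, θ i u ≤ ∑ v ∈ T, w i v u := by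
  have hodd := mem_ltIter_succ_of_gateways_eq hw0 hwV hθ hgw hT
  refine mem_ltIter_succ_of_mem_iff hw0 hwV hθ ?_ hodd u j
  ext v
  simp [hodd]

end CliqueCoupling

open CliqueCoupling in
theorem ltIter_clique_two_mul_succ {U : Type*} [Fintype U] [DecidableEq U] {k : ℕ}
    {Vmem : Fin k → Finset U} {w : Fin k → U → U → ℝ} {θ : Fin k → U → ℝ}
    (hw0 : ∀ i v u, 0 ≤ w i v u)
    (hwV : ∀ i v u, v ∉ Vmem i ∨ u ∉ Vmem i → w i v u = 0) (hθ : ∀ i u, 0 < θ i u)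
    (S : Finset U) (t : ℕ) :
    ltIter (cliqueW Vmem w θ) (cliqueTheta Vmem θ) (S.image (·, none)) (2 * (t + 1)) =
      multiIter w θ S (t + 1) ×ˢ univ := by
  induction t with
  | zero =>
    ext ⟨u, j⟩
    rw [mem_ltIter_add_two hw0 hwV hθ (T := S) _ _ u j, mem_product, mem_multiIter_succ]
    · simp [multiIter]
    · ext; simp [ltIter]
    · simp [ltIter]
  | succ t ih =>
    ext ⟨u, j⟩
    rw [show 2 * (t + 1 + 1) = 2 * (t + 1) + 2 by ring,
      mem_ltIter_add_two hw0 hwV hθ (T := multiIter w θ S (t + 1)) _ _ u j, mem_product,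
      mem_multiIter_succ (t := t + 1)]
    · simp
    · ext; simp [ih]
    · simp [ih]

theorem lossless_beta_fraction_iff_general
    {U : Type*} [Fintype U] [DecidableEq U] {k : ℕ}
    (Vmem : Fin k → Finset U) (w : Fin k → U → U → ℝ) (θ : Fin k → U → ℝ)
    (hw0 : ∀ i v u, 0 ≤ w i v u)
    (hwV : ∀ i v u, v ∉ Vmem i ∨ u ∉ Vmem i → w i v u = 0)
    (hθpos : ∀ i u, 0 < θ i u)
    (β : ℝ)
    (S : Finset U) (d : ℕ) (hd : 1 ≤ d) :
    β * (Fintype.card U : ℝ) ≤ ((multiIter w θ S d).card : ℝ) ↔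
      β * (((k + 1) * Fintype.card U : ℕ) : ℝ) ≤
        ((ltIter (cliqueW Vmem w θ) (cliqueTheta Vmem θ)
            (S.image (fun s => (s, (none : Option (Fin k))))) (2 * d)).card : ℝ) := by
  obtain ⟨t, rfl⟩ : ∃ t, d = t + 1 := Nat.exists_eq_add_of_le' hd
  rw [ltIter_clique_two_mul_succ hw0 hwV hθpos, card_product, card_univ, Fintype.card_option,
    Fintype.card_fin]
  push_cast
  rw [mul_left_comm, mul_comm _ ((k : ℝ) + 1)]
  exact (mul_le_mul_iff_right₀ (by positivity)).symm

/-- **Theorem 2.** With the clique lossless coupling scheme, a seed set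
`S ⊆ U` influences at least a `β` fraction of the users of `G^{1..k}` after `d` hops
iff `S' = { s⁰ : s ∈ S }` influences at least a `β` fraction of the vertices of the
coupled network `G` (of which there are `|V| = (k+1)·|U|`) after `2d` hops. -/
theorem lossless_beta_fraction_iff
    {U : Type*} [Fintype U] [DecidableEq U] {k : ℕ} (hk : 1 ≤ k)
    (Vmem : Fin k → Finset U) (w : Fin k → U → U → ℝ) (θ : Fin k → U → ℝ)
    (hw0 : ∀ i v u, 0 ≤ w i v u)
    (hwV : ∀ i v u, v ∉ Vmem i ∨ u ∉ Vmem i → w i v u = 0)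
    (hθpos : ∀ i u, 0 < θ i u)
    (β : ℝ) (hβ0 : 0 < β) (hβ1 : β ≤ 1)
    (S : Finset U) (d : ℕ) (hd : 1 ≤ d) :
    β * (Fintype.card U : ℝ) ≤ ((multiIter w θ S d).card : ℝ) ↔
      β * (((k + 1) * Fintype.card U : ℕ) : ℝ) ≤
        ((ltIter (cliqueW Vmem w θ) (cliqueTheta Vmem θ)
            (S.image (fun s => (s, (none : Option (Fin k))))) (2 * d)).card : ℝ) :=
  lossless_beta_fraction_iff_general Vmem w θ hw0 hwV hθpos β S d hd
end
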